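/- arXiv:1007.2706 — 2 statements merged into one kernel-verified Lean document; each statement's English description precedes it below -/
import Mathlib

section
/- Let A be a finitely annihilated group and G any group. Then both the direct product A × G and the free product A ∗ G are finitely annihilated. -/
/-- A group `G` is *finitely annihilated* if every element of `G` lies in some
proper normal finite-index subgroup of `G`. -/
def FinitelyAnnihilated (G : Type*) [Group G] : Prop :=
  ∀ g : G, ∃ N : Subgroup G, N.Normal ∧ N ≠ ⊤ ∧ N.FiniteIndex ∧ g ∈ N

theorem FinitelyAnnihilated.of_surjective {H A : Type*} [Group H] [Group A] {f : H →* A}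
    (hf : Function.Surjective f) (hA : FinitelyAnnihilated A) : FinitelyAnnihilated H := by
  intro h
  obtain ⟨N, hN_normal, hN_ne_top, hN_finiteIndex, hfh⟩ := hA (f h)
  refine ⟨N.comap f, hN_normal.comap f, ?_, ?_, hfh⟩
  · rwa [Ne, ← Subgroup.comap_top f, (Subgroup.comap_injective hf).eq_iff]
  · exact ⟨Subgroup.index_comap_of_surjective N hf ▸ hN_finiteIndex.index_ne_zero⟩

/-- If `A` is finitely annihilated and `G` is any group then both the direct product
`A × G` and the free product `A ∗ G` are finitely annihilated. -/
theorem finitelyAnnihilated_prod_and_coprod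
    (A G : Type*) [Group A] [Group G] (hA : FinitelyAnnihilated A) :
    FinitelyAnnihilated (A × G) ∧ FinitelyAnnihilated (Monoid.Coprod A G) :=
  ⟨hA.of_surjective (f := MonoidHom.fst A G) Prod.fst_surjective,
    hA.of_surjective Monoid.Coprod.fst_surjective⟩
end

section
/- Let G be a finitely generated abelian group and n ≥ 1 an integer. Then G is n-finitely annihilated if and only if the weight of G is at least n+1. -/
/-- The *weight* of a group `G`: the least `n` such that `G` is the normal
closure of some `n` of its elements (the trivial group has weight `0`). -/
noncomputable def weight (G : Type*) [Group G] : ℕ :=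
  sInf {n : ℕ | ∃ S : Finset G, S.card = n ∧ Subgroup.normalClosure (S : Set G) = ⊤}

/-- A group `G` is *`n`-finitely annihilated* if every collection of `n` elements of
`G` lies in some proper normal finite-index subgroup of `G`. -/
def NFinitelyAnnihilated (G : Type*) [Group G] (n : ℕ) : Prop :=
  ∀ f : Fin n → G, ∃ N : Subgroup G, N.Normal ∧ N ≠ ⊤ ∧ N.FiniteIndex ∧ ∀ j, f j ∈ N

/-!
In a finitely generated group the subgroup lattice is coatomic (`⊤` is a compact element), so every
proper subgroup lies in a maximal one. In an abelian group a maximal subgroup `M` is normal and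
`G ⧸ M` is simple abelian, hence of prime order; so `M` has finite index. Therefore `n` elements
lie in a proper normal subgroup of finite index exactly when they do not normally generate `G`,
which for all `n`-tuples at once means that the weight exceeds `n`.
-/

namespace Subgroup

variable {G : Type*}

theorem closure_eq_iSup_zpowers [Group G] (s : Set G) : closure s = ⨆ g ∈ s, zpowers g := by
  conv_lhs => rw [← Set.biUnion_of_singleton s]
  simp only [Subgroup.closure_iUnion, zpowers_eq_closure]

theorem isCompactElement_zpowers [Group G] (g : G) : IsCompactElement (zpowers g) := by
  rw [CompleteLattice.isCompactElement_iff_le_of_directed_sSup_le]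
  intro D hne hdir hle
  obtain ⟨K, hK, hgK⟩ := (mem_sSup_of_directedOn hne hdir).mp (hle (mem_zpowers g))
  exact ⟨K, hK, zpowers_le.mpr hgK⟩

theorem finiteIndex_of_isCoatom [CommGroup G] {M : Subgroup G} (hM : IsCoatom M) :
    M.FiniteIndex := by
  have e : Subgroup (G ⧸ M) ≃o Set.Ici M := QuotientGroup.comapMk'OrderIso M
  have : IsSimpleOrder (Subgroup (G ⧸ M)) :=
    e.isSimpleOrder_iff.mpr (Set.isSimpleOrder_Ici_iff_isCoatom.mpr hM)
  have : IsSimpleGroup (G ⧸ M) :=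
    { toNontrivial := nontrivial_iff.mp inferInstance
      eq_bot_or_eq_top_of_normal := fun H _ => IsSimpleOrder.eq_bot_or_eq_top H }
  have := IsSimpleGroup.finite (α := G ⧸ M)
  exact finiteIndex_of_finite_quotient

end Subgroup

theorem Group.FG.isCoatomic_subgroup {G : Type*} [Group G] (hfg : Group.FG G) :
    IsCoatomic (Subgroup G) := by
  obtain ⟨S, hS⟩ := hfg.out
  refine CompleteLattice.coatomic_of_top_compact ?_
  rw [← hS, Subgroup.closure_eq_iSup_zpowers]
  simp only [Finset.mem_coe, ← Finset.sup_eq_iSup]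
  exact CompleteLattice.isCompactElement_finsetSup S fun g _ => Subgroup.isCompactElement_zpowers g

theorem Finset.exists_fin_subset_range {α : Type*} [Nonempty α] (S : Finset α) {n : ℕ}
    (hn : S.card ≤ n) : ∃ f : Fin n → α, (S : Set α) ⊆ Set.range f := by
  inhabit α
  refine ⟨fun j => S.toList.getD j default, fun s hs => ?_⟩
  obtain ⟨i, hi, rfl⟩ := List.getElem_of_mem (Finset.mem_toList.mpr hs)
  exact ⟨⟨i, (S.length_toList ▸ hi).trans_le hn⟩, by simp [List.getElem?_eq_getElem hi]⟩

section Weight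

variable {G : Type*} [Group G]

theorem weight_le_card {S : Finset G} (hS : Subgroup.normalClosure (S : Set G) = ⊤) :
    weight G ≤ S.card :=
  Nat.sInf_le ⟨S, rfl, hS⟩

theorem exists_card_eq_weight (h : ∃ S : Finset G, Subgroup.normalClosure (S : Set G) = ⊤) :
    ∃ S : Finset G, S.card = weight G ∧ Subgroup.normalClosure (S : Set G) = ⊤ :=
  let ⟨S, hS⟩ := h
  Nat.sInf_mem (s := {n | ∃ S : Finset G, S.card = n ∧ Subgroup.normalClosure (S : Set G) = ⊤})
    ⟨S.card, S, rfl, hS⟩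

theorem lt_weight_iff (h : ∃ S : Finset G, Subgroup.normalClosure (S : Set G) = ⊤) {n : ℕ} :
    n < weight G ↔ ∀ f : Fin n → G, Subgroup.normalClosure (Set.range f) ≠ ⊤ := by
  classical
  constructor
  · intro hn f hf
    have : weight G ≤ n := calc
      weight G ≤ (Finset.univ.image f).card := weight_le_card (by simpa using hf)
      _ ≤ n := Finset.card_image_le.trans_eq (Finset.card_fin n)
    omega
  · intro hf
    by_contra! hle
    obtain ⟨S, hcard, hS⟩ := exists_card_eq_weight h
    obtain ⟨f, hSf⟩ := S.exists_fin_subset_range (hcard.trans_le hle)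
    exact hf f (top_le_iff.mp (hS ▸ Subgroup.normalClosure_mono hSf))

end Weight

theorem nFinitelyAnnihilated_iff_forall_normalClosure_ne_top {G : Type*} [CommGroup G]
    [IsCoatomic (Subgroup G)] {n : ℕ} :
    NFinitelyAnnihilated G n ↔ ∀ f : Fin n → G, Subgroup.normalClosure (Set.range f) ≠ ⊤ := by
  constructor
  · intro hFA f hf
    obtain ⟨N, hN, hNtop, -, hfN⟩ := hFA f
    exact hNtop (top_le_iff.mp
      (hf ▸ Subgroup.normalClosure_le_normal (Set.range_subset_iff.mpr hfN)))
  · intro hf f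
    obtain ⟨M, hM, hfM⟩ := (IsCoatomic.eq_top_or_exists_le_coatom _).resolve_left (hf f)
    exact ⟨M, Subgroup.normal_of_isMulCommutative M, hM.ne_top, Subgroup.finiteIndex_of_isCoatom hM,
      fun j => hfM (Subgroup.subset_normalClosure (Set.mem_range_self j))⟩

theorem nFinitelyAnnihilated_iff_weight_general
    (G : Type*) [CommGroup G] (hfg : Group.FG G) (n : ℕ) :
    NFinitelyAnnihilated G n ↔ n + 1 ≤ weight G := by
  have := hfg.isCoatomic_subgroup
  obtain ⟨S, hS⟩ := hfg.out
  have hnormal : Subgroup.normalClosure (S : Set G) = ⊤ :=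
    top_le_iff.mp (hS ▸ Subgroup.closure_le_normalClosure)
  rw [nFinitelyAnnihilated_iff_forall_normalClosure_ne_top, Nat.add_one_le_iff,
    lt_weight_iff ⟨S, hnormal⟩]

/-- A finitely generated abelian group is `n`-finitely annihilated iff its weight is at
least `n + 1`. -/
theorem nFinitelyAnnihilated_iff_weight
    (G : Type*) [CommGroup G] (hfg : Group.FG G) (n : ℕ) (hn : 1 ≤ n) :
    NFinitelyAnnihilated G n ↔ n + 1 ≤ weight G :=
  nFinitelyAnnihilated_iff_weight_general G hfg n
end
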